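/- Let n ≥ 2, ℓ ∈ [n], and let φ: ℝ^{n×n} → ℝ^{(n−1)×(n−1)} send a matrix to its upper-left (n−1)×(n−1) submatrix. Fix T ∈ Arb(ℓ,n) and let D̄_T be the convex cone generated by {M̄_{i,j} : (i,j) ∉ E(T)} and C̄_T the convex cone generated by {φ(W^{T,e}) : e a directed edge with e ∉ E(T)}. Then: (a) for every directed edge e = (s,t) ∉ E(T) and every pair (i,j) with i ≠ j and (i,j) ∉ E(T), ⟨φ(W^{T,e}), M̄_{i,j}⟩ equals 1 if (i,j) = (s,t) and equals 0 otherwise; (b) C̄_T is the dual cone of D̄_T, i.e., C̄_T = {Y ∈ ℝ^{(n−1)×(n−1)} : ⟨X, Y⟩ ≥ 0 for all X ∈ D̄_T}. -/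

import Mathlib

/-!
Fix an off-tree edge `e`. Every path weight `w^T(v)` is a sum of edge weights `w(p u, u)`, so it
has zero column sums, row sums `1_ℓ - 1_v`, and off the diagonal it is supported on tree edges.
Hence `W^{T,e}` has zero row and column sums, and on off-tree positions `(i, j)` it equals the
indicator of `e`. For a matrix with zero row and column sums, the entries in the last row and
column are minus the sums of the other entries in their column or row, which is exactly what the
`-1` rows and columns of `M̄_{i,j}` pick up: so `⟨φ(X), M̄_{i,j}⟩ = X(i, j)`, giving (a).

By (a) the families `φ(W^{T,e})` and `M̄_f` are biorthogonal, and there are `n(n-1) - (n-1) =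
(n-1)²` off-tree edges, so both are bases of `ℝ^{(n-1)×(n-1)}`. The coefficient of `Y` on
`φ(W^{T,e})` is `⟨M̄_e, Y⟩`, so `Y` lies in the cone `C̄_T` iff it pairs nonnegatively with every
`M̄_e`, which is (b).
-/

open Finset

/-- The weight matrix of a directed edge `(a, b)`: `(a,b)`-entry `1`, `(b,b)`-entry `-1`. -/
def wEdge (n : ℕ) (a b : Fin n) : Matrix (Fin n) (Fin n) ℤ :=
  Matrix.single a b 1 - Matrix.single b b 1

/-- The set of `ℓ`-arborescences on `[n]`, encoded by their parent functions. -/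
def arbs (n : ℕ) (ℓ : Fin n) : Finset (Fin n → Fin n) :=
  Finset.univ.filter fun p => p ℓ = ℓ ∧ ∀ v, p^[n] v = ℓ

/-- The edge set of the arborescence with parent function `p`. -/
def arbEdges (n : ℕ) (ℓ : Fin n) (p : Fin n → Fin n) : Finset (Fin n × Fin n) :=
  Finset.univ.filter fun e => e.2 ≠ ℓ ∧ p e.2 = e.1

/-- Directed edges between distinct vertices that are not edges of the arborescence. -/
def offEdges (n : ℕ) (ℓ : Fin n) (p : Fin n → Fin n) : Finset (Fin n × Fin n) :=
  Finset.univ.filter fun e => e.1 ≠ e.2 ∧ e ∉ arbEdges n ℓ p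

/-- `w^T(v)`: the sum of the weights of the edges on the path from the root to `v`. -/
def wPath (n : ℕ) (p : Fin n → Fin n) (v : Fin n) : Matrix (Fin n) (Fin n) ℤ :=
  ∑ k ∈ Finset.range n, wEdge n (p (p^[k] v)) (p^[k] v)

/-- `W^{T,e} = w^T(s) - w^T(t) + w(e)` for `e = (s,t)`. -/
def WTE (n : ℕ) (p : Fin n → Fin n) (e : Fin n × Fin n) : Matrix (Fin n) (Fin n) ℤ :=
  wPath n p e.1 - wPath n p e.2 + wEdge n e.1 e.2

/-- `φ(W^{T,e})`: the upper-left `(n-1) × (n-1)` submatrix of `W^{T,e}`, as a real matrix. -/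
def WTEbar (n : ℕ) (p : Fin n → Fin n) (e : Fin n × Fin n) :
    Matrix (Fin (n - 1)) (Fin (n - 1)) ℝ :=
  ((WTE n p e).map (Int.cast : ℤ → ℝ)).submatrix
    (Fin.castLE (Nat.sub_le n 1)) (Fin.castLE (Nat.sub_le n 1))

/-- The real matrix `M̄_{i,j}` (for `i ≠ j` in `[n]`). -/
def Mbar (n : ℕ) (i j : Fin n) : Matrix (Fin (n - 1)) (Fin (n - 1)) ℝ :=
  Matrix.of fun a b =>
    if (a : ℕ) = (i : ℕ) ∧ (b : ℕ) = (j : ℕ) then 1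
    else if (a : ℕ) = (i : ℕ) ∧ (j : ℕ) = n - 1 then -1
    else if (i : ℕ) = n - 1 ∧ (b : ℕ) = (j : ℕ) then -1
    else 0

/-- The convex cone generated by a finite family of vectors: all nonnegative combinations. -/
def coneOf {ι : Type*} [Fintype ι] {E : Type*} [AddCommMonoid E] [Module ℝ E]
    (v : ι → E) : Set E :=
  {x | ∃ lam : ι → ℝ, (∀ k, 0 ≤ lam k) ∧ x = ∑ k, lam k • v k}

/-- Entrywise dot product of two real matrices. -/
def mdot {m k : Type*} [Fintype m] [Fintype k] (X Y : Matrix m k ℝ) : ℝ :=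
  ∑ i, ∑ j, X i j * Y i j

lemma wEdge_apply (n : ℕ) (a b i j : Fin n) :
    wEdge n a b i j = (if a = i ∧ b = j then 1 else 0) - (if b = i ∧ b = j then 1 else 0) := by
  simp [wEdge, Matrix.single_apply]

lemma sum_wEdge_row (n : ℕ) (a b i : Fin n) :
    ∑ j, wEdge n a b i j = (if i = a then 1 else 0) - (if i = b then 1 else 0) := by
  simp [wEdge_apply, sum_sub_distrib, ite_and, eq_comm]

lemma sum_wEdge_col (n : ℕ) (a b j : Fin n) : ∑ i, wEdge n a b i j = 0 := by
  simp [wEdge_apply, sum_sub_distrib, ite_and]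

lemma wPath_apply (n : ℕ) (p : Fin n → Fin n) (v i j : Fin n) :
    wPath n p v i j = ∑ k ∈ range n, wEdge n (p (p^[k] v)) (p^[k] v) i j := by
  simp [wPath, Matrix.sum_apply]

lemma sum_wPath_row (n : ℕ) (p : Fin n → Fin n) {ℓ v : Fin n} (hv : p^[n] v = ℓ) (i : Fin n) :
    ∑ j, wPath n p v i j = (if i = ℓ then 1 else 0) - (if i = v then 1 else 0) := by
  let onPath (k : ℕ) : ℤ := if i = p^[k] v then 1 else 0
  have step (k : ℕ) : ∑ j, wEdge n (p (p^[k] v)) (p^[k] v) i j = onPath (k + 1) - onPath k := by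
    simp [onPath, sum_wEdge_row, Function.iterate_succ_apply']
  simp only [wPath_apply]
  rw [sum_comm, sum_congr rfl fun k _ => step k, sum_range_sub]
  simp only [onPath]
  rw [hv, Function.iterate_zero_apply]

lemma sum_wPath_col (n : ℕ) (p : Fin n → Fin n) (v j : Fin n) : ∑ i, wPath n p v i j = 0 := by
  simp only [wPath_apply]
  rw [sum_comm]
  exact sum_eq_zero fun k _ => sum_wEdge_col n _ _ j

lemma sum_WTE_row (n : ℕ) {ℓ : Fin n} {p : Fin n → Fin n} (hpn : ∀ v, p^[n] v = ℓ)
    (e : Fin n × Fin n) (i : Fin n) : ∑ j, WTE n p e i j = 0 := by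
  simp only [WTE, Matrix.add_apply, Matrix.sub_apply, sum_add_distrib,
    sum_sub_distrib, sum_wPath_row n p (hpn _), sum_wEdge_row]
  ring

lemma sum_WTE_col (n : ℕ) (p : Fin n → Fin n) (e : Fin n × Fin n) (j : Fin n) :
    ∑ i, WTE n p e i j = 0 := by
  simp [WTE, sum_add_distrib, sum_sub_distrib, sum_wPath_col, sum_wEdge_col]

lemma wEdge_parent_apply_eq_zero {n : ℕ} {ℓ : Fin n} {p : Fin n → Fin n} (hpl : p ℓ = ℓ)
    (u : Fin n) {i j : Fin n} (hij : i ≠ j) (hoff : (i, j) ∉ arbEdges n ℓ p) :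
    wEdge n (p u) u i j = 0 := by
  have hparent : ¬(p u = i ∧ u = j) := by
    rintro ⟨rfl, rfl⟩
    by_cases hu : u = ℓ
    · exact hij (by rw [hu, hpl])
    · exact hoff (by simp [arbEdges, hu])
  have hdiag : ¬(u = i ∧ u = j) := fun ⟨hi, hj⟩ => hij (hi.symm.trans hj)
  simp [wEdge_apply, hparent, hdiag]

lemma wPath_apply_eq_zero {n : ℕ} {ℓ : Fin n} {p : Fin n → Fin n} (hpl : p ℓ = ℓ)
    (v : Fin n) {i j : Fin n} (hij : i ≠ j) (hoff : (i, j) ∉ arbEdges n ℓ p) :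
    wPath n p v i j = 0 := by
  rw [wPath_apply]
  exact sum_eq_zero fun k _ => wEdge_parent_apply_eq_zero hpl _ hij hoff

lemma WTE_apply_of_mem_offEdges {n : ℕ} {ℓ : Fin n} {p : Fin n → Fin n} (hpl : p ℓ = ℓ)
    (e : Fin n × Fin n) {f : Fin n × Fin n} (hf : f ∈ offEdges n ℓ p) :
    WTE n p e f.1 f.2 = if f = e then 1 else 0 := by
  simp only [offEdges, mem_filter, mem_univ, true_and] at hf
  obtain ⟨hne, hoff⟩ := hf
  have hdiag : ¬(e.2 = f.1 ∧ e.2 = f.2) := fun ⟨h1, h2⟩ => hne (h1.symm.trans h2)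
  simp [WTE, wPath_apply_eq_zero hpl _ hne hoff, wEdge_apply, hdiag, Prod.ext_iff,
    eq_comm (a := f.1), eq_comm (a := f.2)]

lemma sum_castLE_pred {M : Type*} [AddCommGroup M] {n : ℕ} (f : Fin n → M) {k : Fin n}
    (hk : (k : ℕ) = n - 1) :
    ∑ b : Fin (n - 1), f (Fin.castLE (Nat.sub_le n 1) b) = ∑ b, f b - f k := by
  obtain ⟨m, rfl⟩ : ∃ m, n = m + 1 := ⟨n - 1, by omega⟩
  obtain rfl : k = Fin.last m := Fin.ext (by simpa using hk)
  rw [Fin.sum_univ_castSucc, add_sub_cancel_right,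
    ← Fin.sum_congr' (fun b : Fin m => f b.castSucc) (by omega : m + 1 - 1 = m)]
  rfl

section Mbar

variable {n : ℕ} (Z : Matrix (Fin (n - 1)) (Fin (n - 1)) ℝ) {i j : Fin n}

lemma mdot_Mbar_of_lt_of_lt (hi : (i : ℕ) < n - 1) (hj : (j : ℕ) < n - 1) :
    mdot Z (Mbar n i j) = Z ⟨i, hi⟩ ⟨j, hj⟩ := by
  have hM (a b : Fin (n - 1)) : Mbar n i j a b = if a = ⟨i, hi⟩ ∧ b = ⟨j, hj⟩ then 1 else 0 := by
    simp [Mbar, Fin.ext_iff, hi.ne, hj.ne]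
  simp [mdot, hM, ite_and]

lemma mdot_Mbar_of_lt_of_eq (hi : (i : ℕ) < n - 1) (hj : (j : ℕ) = n - 1) :
    mdot Z (Mbar n i j) = -∑ b, Z ⟨i, hi⟩ b := by
  have hM (a b : Fin (n - 1)) : Mbar n i j a b = if a = ⟨i, hi⟩ then -1 else 0 := by
    simp [Mbar, Fin.ext_iff, hi.ne, hj, b.isLt.ne]
  simp [mdot, hM]

lemma mdot_Mbar_of_eq_of_lt (hi : (i : ℕ) = n - 1) (hj : (j : ℕ) < n - 1) :
    mdot Z (Mbar n i j) = -∑ a, Z a ⟨j, hj⟩ := by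
  have hM (a b : Fin (n - 1)) : Mbar n i j a b = if b = ⟨j, hj⟩ then -1 else 0 := by
    simp [Mbar, Fin.ext_iff, hi, hj.ne, a.isLt.ne]
  rw [mdot, sum_comm]
  simp [hM]

end Mbar

lemma mdot_submatrix_castLE_Mbar {n : ℕ} (X : Matrix (Fin n) (Fin n) ℝ)
    (hrow : ∀ i, ∑ j, X i j = 0) (hcol : ∀ j, ∑ i, X i j = 0) {i j : Fin n} (hij : i ≠ j) :
    mdot (X.submatrix (Fin.castLE (Nat.sub_le n 1)) (Fin.castLE (Nat.sub_le n 1)))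
      (Mbar n i j) = X i j := by
  rcases (show (i : ℕ) < n - 1 ∨ (i : ℕ) = n - 1 by omega) with hi | hi <;>
  rcases (show (j : ℕ) < n - 1 ∨ (j : ℕ) = n - 1 by omega) with hj | hj
  · rw [mdot_Mbar_of_lt_of_lt _ hi hj]
    rfl
  · rw [mdot_Mbar_of_lt_of_eq _ hi hj]
    simp [sum_castLE_pred (X i) hj, hrow]
  · rw [mdot_Mbar_of_eq_of_lt _ hi hj]
    simp [sum_castLE_pred (fun a => X a j) hi, hcol]
  · exact absurd (Fin.ext (hi.trans hj.symm)) hij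

lemma mdot_WTEbar_Mbar {n : ℕ} {ℓ : Fin n} {p : Fin n → Fin n} (hpn : ∀ v, p^[n] v = ℓ)
    (e : Fin n × Fin n) {i j : Fin n} (hij : i ≠ j) :
    mdot (WTEbar n p e) (Mbar n i j) = WTE n p e i j := by
  refine mdot_submatrix_castLE_Mbar _ (fun i => ?_) (fun j => ?_) hij
  · simp [← Int.cast_sum, sum_WTE_row n hpn]
  · simp [← Int.cast_sum, sum_WTE_col]

section Counting

variable {n : ℕ} {ℓ : Fin n} {p : Fin n → Fin n}

lemma arbEdges_eq_image (ℓ : Fin n) (p : Fin n → Fin n) :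
    arbEdges n ℓ p = (univ.erase ℓ).image fun t => (p t, t) := by
  ext ⟨a, b⟩
  simp [arbEdges, and_comm, eq_comm]

lemma card_arbEdges (ℓ : Fin n) (p : Fin n → Fin n) : (arbEdges n ℓ p).card = n - 1 := by
  rw [arbEdges_eq_image, card_image_of_injective _ fun a b h => congrArg Prod.snd h,
    card_erase_of_mem (mem_univ _), card_univ, Fintype.card_fin]

lemma arbEdges_subset_offDiag (hpn : ∀ v, p^[n] v = ℓ) : arbEdges n ℓ p ⊆ univ.offDiag := by
  intro e he
  simp only [arbEdges, mem_filter, mem_univ, true_and] at he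
  obtain ⟨hroot, hparent⟩ := he
  refine mem_offDiag.mpr ⟨mem_univ _, mem_univ _, fun hfix => hroot ?_⟩
  rw [← hpn e.2, Function.iterate_fixed (hparent.trans hfix)]

lemma card_offEdges (hpn : ∀ v, p^[n] v = ℓ) : (offEdges n ℓ p).card = (n - 1) * (n - 1) := by
  have hoff : offEdges n ℓ p = univ.offDiag \ arbEdges n ℓ p := by
    ext e
    simp [offEdges]
  obtain ⟨m, rfl⟩ : ∃ m, n = m + 1 := ⟨n - 1, by have := ℓ.isLt; omega⟩
  rw [hoff, card_sdiff_of_subset (arbEdges_subset_offDiag hpn), offDiag_card, card_arbEdges,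
    card_univ, Fintype.card_fin, Nat.add_sub_cancel, add_mul, one_mul, mul_add_one,
    Nat.add_sub_cancel, Nat.add_sub_cancel]

end Counting

section Duality

variable {ι m k : Type*} [Fintype ι] [Fintype m] [Fintype k]

lemma mdot_comm (X Y : Matrix m k ℝ) : mdot X Y = mdot Y X := by
  simp [mdot, mul_comm]

lemma mdot_sum_smul_right (X : Matrix m k ℝ) (c : ι → ℝ) (A : ι → Matrix m k ℝ) :
    mdot X (∑ t, c t • A t) = ∑ t, c t * mdot X (A t) := by
  simp only [mdot, Matrix.sum_apply, Matrix.smul_apply, smul_eq_mul, mul_sum]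
  rw [sum_comm_cycle]
  exact sum_congr rfl fun t _ => sum_congr rfl fun a _ =>
    sum_congr rfl fun b _ => by ring

lemma mem_coneOf_self {E : Type*} [AddCommMonoid E] [Module ℝ E] [DecidableEq ι]
    (v : ι → E) (a : ι) : v a ∈ coneOf v :=
  ⟨fun t => if t = a then 1 else 0, fun t => by positivity, by simp [ite_smul]⟩

variable [DecidableEq ι] {u v : ι → Matrix m k ℝ}

lemma mdot_sum_smul_of_biorthogonal (huv : ∀ a b, mdot (u a) (v b) = if a = b then 1 else 0)
    (c : ι → ℝ) (a : ι) : mdot (u a) (∑ t, c t • v t) = c a := by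
  simp [mdot_sum_smul_right, huv]

lemma coneOf_eq_dual_of_biorthogonal (huv : ∀ a b, mdot (u a) (v b) = if a = b then 1 else 0)
    (hcard : Fintype.card ι = Fintype.card m * Fintype.card k) :
    coneOf v = {Y | ∀ X ∈ coneOf u, 0 ≤ mdot X Y} := by
  have hli : LinearIndependent ℝ v := by
    refine Fintype.linearIndependent_iff.mpr fun c hc a => ?_
    simpa [hc, mdot] using (mdot_sum_smul_of_biorthogonal huv c a).symm
  have hspan : Submodule.span ℝ (Set.range v) = ⊤ :=
    hli.span_eq_top_of_card_eq_finrank' (by simp [hcard, Module.finrank_matrix])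
  ext Y
  constructor
  · rintro ⟨c, hc, rfl⟩ X ⟨d, hd, rfl⟩
    rw [mdot_comm, mdot_sum_smul_right]
    refine sum_nonneg fun a _ => mul_nonneg (hd a) ?_
    rw [mdot_comm, mdot_sum_smul_of_biorthogonal huv]
    exact hc a
  · intro hY
    have hYspan : Y ∈ Submodule.span ℝ (Set.range v) := hspan ▸ Submodule.mem_top
    obtain ⟨c, rfl⟩ := (Submodule.mem_span_range_iff_exists_fun ℝ).mp hYspan
    refine ⟨c, fun a => ?_, rfl⟩
    simpa [mdot_sum_smul_of_biorthogonal huv] using hY _ (mem_coneOf_self u a)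

end Duality

theorem stmt12_general (n : ℕ) (ℓ : Fin n) (p : Fin n → Fin n)
    (hp : p ∈ arbs n ℓ) :
    (∀ e ∈ offEdges n ℓ p, ∀ f ∈ offEdges n ℓ p,
      mdot (WTEbar n p e) (Mbar n f.1 f.2) = if f = e then 1 else 0) ∧
    (coneOf fun e : {e : Fin n × Fin n // e ∈ offEdges n ℓ p} => WTEbar n p e.1) =
      {Y | ∀ X ∈ coneOf fun e : {e : Fin n × Fin n // e ∈ offEdges n ℓ p} =>
          Mbar n e.1.1 e.1.2, 0 ≤ mdot X Y} := by
  obtain ⟨hpl, hpn⟩ := (mem_filter.mp hp).2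
  have pairing : ∀ e ∈ offEdges n ℓ p, ∀ f ∈ offEdges n ℓ p,
      mdot (WTEbar n p e) (Mbar n f.1 f.2) = if f = e then 1 else 0 := by
    intro e _ f hf
    have hne : f.1 ≠ f.2 := (mem_filter.mp hf).2.1
    rw [mdot_WTEbar_Mbar hpn e hne, WTE_apply_of_mem_offEdges hpl e hf]
    split_ifs <;> simp
  refine ⟨pairing, coneOf_eq_dual_of_biorthogonal (fun f e => ?_) ?_⟩
  · rw [mdot_comm, pairing e.1 e.2 f.1 f.2]
    exact if_congr Subtype.ext_iff.symm rfl rfl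
  · simp [card_offEdges hpn]

theorem stmt12 (n : ℕ) (hn : 2 ≤ n) (ℓ : Fin n) (p : Fin n → Fin n)
    (hp : p ∈ arbs n ℓ) :
    (∀ e ∈ offEdges n ℓ p, ∀ f ∈ offEdges n ℓ p,
      mdot (WTEbar n p e) (Mbar n f.1 f.2) = if f = e then 1 else 0) ∧
    (coneOf fun e : {e : Fin n × Fin n // e ∈ offEdges n ℓ p} => WTEbar n p e.1) =
      {Y | ∀ X ∈ coneOf fun e : {e : Fin n × Fin n // e ∈ offEdges n ℓ p} =>
          Mbar n e.1.1 e.1.2, 0 ≤ mdot X Y} :=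
  stmt12_general n ℓ p hp
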